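/- Define a preorder on torsion-free FDH functions: for h, h′ of ranks ρ, ρ′, degrees d, d′, deficiencies δ, δ′, set h ≽ h′ iff d/ρ > d′/ρ′, or (d/ρ = d′/ρ′ and δ/ρ ≤ δ′/ρ′); and h ≻ h′ iff d/ρ > d′/ρ′, or (d/ρ = d′/ρ′ and δ/ρ < δ′/ρ′). Let h be an FDH function with WHN graded pieces h₁, …, h_{s+1} (the nontrivial torsion-free pieces), each decomposed into rank-one pieces h_i = Σ_{j=1}^{ρ_i} h_i^j as in the canonical decomposition. Then h_i^1 ≽ h_i^2 ≽ ⋯ ≽ h_i^{ρ_i} for each i = 1, …, s+1. -/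

import Mathlib

open Finset

/-- First difference `r(n) = h(n) - h(n-1)`. -/
def dr (h : ℤ → ℤ) (n : ℤ) : ℤ := h n - h (n - 1)

/-- An FDH function: nonnegative, nondecreasing first differences nonnegative,
vanishing for `n ≪ 0`, eventually linear `ρ n + σ` with `ρ ≥ 0`. -/
def IsFDH (h : ℤ → ℤ) : Prop :=
  (∀ n, 0 ≤ h n) ∧ (∀ n, 0 ≤ dr h n) ∧ (∃ N : ℤ, ∀ n ≤ N, h n = 0) ∧
  (∃ ρ σ : ℤ, 0 ≤ ρ ∧ ∃ N : ℤ, ∀ n ≥ N, h n = ρ * n + σ)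

/-- Torsion-free: `r(m) ≥ 1` implies `r(n) ≥ 1` for all `n ≥ m`. -/
def TorsionFree (h : ℤ → ℤ) : Prop := ∀ m n : ℤ, m ≤ n → 1 ≤ dr h m → 1 ≤ dr h n

/-- `ht` is the function `h̃(n) = max_{m ≥ n} (h(m) + (n-m) r(m))`. -/
def TildeSpec (h ht : ℤ → ℤ) : Prop :=
  ∀ n : ℤ, IsGreatest {v : ℤ | ∃ m : ℤ, n ≤ m ∧ v = h m + (n - m) * dr h m} (ht n)

/-- `t n` is the largest maximizer of `m ↦ h(m) + (n-m) r(m)` over `m ≥ n`,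
equal to `⊤` when the set of maximizers is unbounded. -/
def TSpec (h ht : ℤ → ℤ) (t : ℤ → WithTop ℤ) : Prop :=
  ∀ n : ℤ,
    (∀ m : ℤ, n ≤ m → ht n = h m + (n - m) * dr h m → (m : WithTop ℤ) ≤ t n) ∧
    (∀ τ : ℤ, t n = (τ : WithTop ℤ) → n ≤ τ ∧ ht n = h τ + (n - τ) * dr h τ) ∧
    (t n = ⊤ → ∀ M : ℤ, ∃ m : ℤ, M ≤ m ∧ n ≤ m ∧ ht n = h m + (n - m) * dr h m)

/-- The function gamma^i of the canonical rank-one decomposition. -/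
def gam (ν β i n : ℤ) : ℤ := if i ≤ β then max (n - ν + 1) 0 else max (n - ν) 0

/-- The rank-one piece h^i = min(gamma^i, (h - sum_{k<i} gamma^k)_+). -/
noncomputable def rkOnePiece (h : ℤ → ℤ) (ν β i n : ℤ) : ℤ :=
  min (gam ν β i n) (max (h n - ∑ k ∈ Finset.Icc 1 (i - 1), gam ν β k n) 0)

/-- t takes exactly two distinct values. -/
def TwoValues (t : ℤ → WithTop ℤ) : Prop :=
  ∃ v w : WithTop ℤ, v ≠ w ∧ (∃ n : ℤ, t n = v) ∧ (∃ n : ℤ, t n = w) ∧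
    ∀ n : ℤ, t n = v ∨ t n = w

/-- g is a rank-one torsion-free FDH-type function of degree d with deficiency
delta = sum over all of ZZ of ((n + d + 1)_+ - g n), the sum being computed over any
finite interval [M, N] outside of which all terms vanish. -/
def HasDegDef (g : ℤ → ℤ) (d δ : ℤ) : Prop :=
  ∃ M N : ℤ, M ≤ N ∧ (∀ n : ℤ, n < M → g n = 0 ∧ n + d + 1 ≤ 0) ∧
    (∀ n : ℤ, n > N → g n = n + d + 1) ∧
    δ = ∑ n ∈ Finset.Icc M N, (max (n + d + 1) 0 - g n)

/-!
Each rank-one piece agrees with `γ^j` for `n ≫ 0`, so its degree is `-ν` for `j ≤ β` and `-ν - 1`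
for `j > β`; in particular degrees do not increase with `j`. The pieces themselves decrease
pointwise in `j`, because `γ^{j+1} ≤ γ^j` and the remainders `(h - Σ_{k<j} γ^k)_+` decrease. When
two consecutive pieces have the same degree, the pointwise inequality therefore gives the
inequality of deficiencies.
-/

lemma gam_nonneg (ν β i n : ℤ) : 0 ≤ gam ν β i n := by
  unfold gam; split <;> exact le_max_right _ _

lemma gam_succ_le (ν β j n : ℤ) : gam ν β (j + 1) n ≤ gam ν β j n := by
  unfold gam
  split_ifs <;> omega

lemma gam_of_le {ν n : ℤ} (β i : ℤ) (hn : ν ≤ n) :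
    gam ν β i n = n + (if i ≤ β then -ν else -ν - 1) + 1 := by
  unfold gam; split_ifs <;> omega

lemma sum_Icc_gam_of_le {ν β n : ℤ} (hβ : 0 ≤ β) (hn : ν ≤ n) {m : ℤ} (hm : 0 ≤ m) :
    ∑ k ∈ Icc 1 m, gam ν β k n = m * (n - ν) + min m β := by
  induction m, hm using Int.leInduction with
  | base => simp only [Icc_eq_empty_of_lt zero_lt_one, sum_empty]; omega
  | succ m hm ih =>
    rw [← insert_Icc_right_eq_Icc_add_one (by omega), sum_insert (by simp), ih, gam_of_le β _ hn]
    split_ifs <;> rw [min_def, min_def] <;> split_ifs <;> linarith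

lemma rkOnePiece_nonneg (h : ℤ → ℤ) (ν β i n : ℤ) : 0 ≤ rkOnePiece h ν β i n :=
  le_min (gam_nonneg ν β i n) (le_max_right _ _)

lemma rkOnePiece_succ_le (h : ℤ → ℤ) (ν β j n : ℤ) :
    rkOnePiece h ν β (j + 1) n ≤ rkOnePiece h ν β j n := by
  unfold rkOnePiece
  rw [add_sub_cancel_right]
  refine min_le_min (gam_succ_le ν β j n) (max_le_max ?_ le_rfl)
  have : ∑ k ∈ Icc 1 (j - 1), gam ν β k n ≤ ∑ k ∈ Icc 1 j, gam ν β k n :=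
    sum_le_sum_of_subset_of_nonneg (Icc_subset_Icc le_rfl (by omega))
      fun k _ _ => gam_nonneg ν β k n
  omega

lemma rkOnePiece_eq_gam {h : ℤ → ℤ} {ρ ν β N : ℤ} (hβ0 : 0 ≤ β) (hβρ : β < ρ)
    (hlin : ∀ n ≥ N, h n = ρ * (n - ν) + β) {j : ℤ} (hj1 : 1 ≤ j) (hjρ : j ≤ ρ)
    {n : ℤ} (hnN : N ≤ n) (hnρ : ν + ρ ≤ n) :
    rkOnePiece h ν β j n = gam ν β j n := by
  have hνn : ν ≤ n := by omega
  unfold rkOnePiece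
  rw [sum_Icc_gam_of_le hβ0 hνn (by omega), hlin n hnN, gam_of_le β j hνn]
  refine min_eq_left (le_max_of_le_left ?_)
  split_ifs
  · rw [min_eq_left (by omega)]; nlinarith
  · rw [min_eq_right (by omega)]; nlinarith

namespace HasDegDef

variable {g : ℤ → ℤ} {d δ : ℤ}

lemma deg_eq_of_eventually (hD : HasDegDef g d δ) {e N₀ : ℤ}
    (hg : ∀ n ≥ N₀, g n = n + e + 1) : d = e := by
  obtain ⟨-, N, -, -, hN, -⟩ := hD
  have h₁ := hN (max (N + 1) N₀) (by omega)
  have h₂ := hg (max (N + 1) N₀) (le_max_right _ _)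
  omega

lemma eq_sum_Icc (hD : HasDegDef g d δ) (hg : ∀ n, 0 ≤ g n) :
    ∃ M N, ∀ L R, L ≤ M → N ≤ R → δ = ∑ n ∈ Icc L R, (max (n + d + 1) 0 - g n) := by
  obtain ⟨M, N, -, hM, hN, hδ⟩ := hD
  refine ⟨M, N, fun L R hL hR => hδ.trans (sum_subset (Icc_subset_Icc hL hR) ?_)⟩
  intro n hLR hMN
  simp only [mem_Icc, not_and_or, not_le] at hLR hMN
  rcases hMN with hn | hn
  · rw [(hM n hn).1, max_eq_right (hM n hn).2, sub_zero]
  · have := hg n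
    rw [hN n hn] at this ⊢
    rw [max_eq_left this, sub_self]

lemma deficiency_le_of_le {g' : ℤ → ℤ} {δ' : ℤ} (hD : HasDegDef g d δ)
    (hD' : HasDegDef g' d δ') (hg : ∀ n, 0 ≤ g n) (hg' : ∀ n, 0 ≤ g' n)
    (hle : ∀ n, g' n ≤ g n) : δ ≤ δ' := by
  obtain ⟨M, N, hδ⟩ := hD.eq_sum_Icc hg
  obtain ⟨M', N', hδ'⟩ := hD'.eq_sum_Icc hg'
  rw [hδ _ _ (min_le_left M M') (le_max_left N N'),
    hδ' _ _ (min_le_right M M') (le_max_right N N')]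
  exact sum_le_sum fun n _ => by linarith [hle n]

end HasDegDef

lemma rkOnePiece_deg_eq {h : ℤ → ℤ} {ρ ν β N : ℤ} (hβ0 : 0 ≤ β) (hβρ : β < ρ)
    (hlin : ∀ n ≥ N, h n = ρ * (n - ν) + β) {j : ℤ} (hj1 : 1 ≤ j) (hjρ : j ≤ ρ)
    {d δ : ℤ} (hD : HasDegDef (rkOnePiece h ν β j) d δ) :
    d = if j ≤ β then -ν else -ν - 1 :=
  hD.deg_eq_of_eventually (N₀ := max N (ν + ρ)) fun n hn => by
    rw [rkOnePiece_eq_gam hβ0 hβρ hlin hj1 hjρ (le_of_max_le_left hn)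
      (le_of_max_le_right hn), gam_of_le β j (by omega)]

theorem pieces_ordered_general (h : ℤ → ℤ)
    (ρ ν β : ℤ) (hβ0 : 0 ≤ β) (hβρ : β < ρ)
    (hlin : ∃ N : ℤ, ∀ n ≥ N, h n = ρ * (n - ν) + β) :
    ∀ j : ℤ, 1 ≤ j → j < ρ →
      ∀ d δ d' δ' : ℤ,
        HasDegDef (rkOnePiece h ν β j) d δ →
        HasDegDef (rkOnePiece h ν β (j + 1)) d' δ' →
        (d' < d ∨ (d = d' ∧ δ ≤ δ')) := by
  obtain ⟨N, hlin⟩ := hlin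
  intro j hj1 hjρ d δ d' δ' hD hD'
  have hd := rkOnePiece_deg_eq hβ0 hβρ hlin hj1 hjρ.le hD
  have hd' := rkOnePiece_deg_eq hβ0 hβρ hlin (by omega) hjρ hD'
  have hle : d' ≤ d := by rw [hd, hd']; split_ifs <;> omega
  rcases hle.lt_or_eq with hlt | rfl
  · exact Or.inl hlt
  · exact Or.inr ⟨rfl, hD.deficiency_le_of_le hD' (rkOnePiece_nonneg h ν β j)
      (rkOnePiece_nonneg h ν β (j + 1)) (rkOnePiece_succ_le h ν β j)⟩

/-- within a WHN graded piece (a torsion-free FDH function with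
trivial WHN filtration), the rank-one pieces are nonincreasing for the order
comparing degree and then (inversely) deficiency:
h^1 >= h^2 >= ... >= h^rho. -/
theorem pieces_ordered (h ht : ℤ → ℤ) (t : ℤ → WithTop ℤ)
    (hF : IsFDH h) (hTF : TorsionFree h) (hT : TildeSpec h ht) (ht' : TSpec h ht t)
    (htwo : TwoValues t)
    (ρ ν β : ℤ) (hβ0 : 0 ≤ β) (hβρ : β < ρ)
    (hlin : ∃ N : ℤ, ∀ n ≥ N, h n = ρ * (n - ν) + β) :
    ∀ j : ℤ, 1 ≤ j → j < ρ →
      ∀ d δ d' δ' : ℤ,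
        HasDegDef (rkOnePiece h ν β j) d δ →
        HasDegDef (rkOnePiece h ν β (j + 1)) d' δ' →
        (d' < d ∨ (d = d' ∧ δ ≤ δ')) :=
  pieces_ordered_general h ρ ν β hβ0 hβρ hlin
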